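/- Let (T₁, T₂) be a twisted triality pair and set K(x) = conj(T₁(x̄)). Then for all x, y ∈ 𝕆 one has K(x)·T₁(y) = T₂(x·y) and T₂(x)·K(y) = K(x·y); in other words, the triples (K, T₁, T₂) and (T₂, K, K) are again triality triples. -/

import Mathlib

noncomputable section

open scoped Quaternion

/-- The complexified quaternions. -/
abbrev Hq : Type := Quaternion ℂ

theorem q_mul_smul (t : ℂ) (a b : Hq) : a * (t • b) = t • (a * b) := by
  rw [← Quaternion.coe_mul_eq_smul, ← Quaternion.coe_mul_eq_smul, ← mul_assoc,
    ← Quaternion.coe_commutes, mul_assoc]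

theorem q_smul_mul (t : ℂ) (a b : Hq) : (t • a) * b = t • (a * b) := by
  rw [← Quaternion.coe_mul_eq_smul, ← Quaternion.coe_mul_eq_smul, mul_assoc]

/-- The complexified octonions, via the Cayley–Dickson construction. -/
abbrev Oct : Type := Hq × Hq

namespace Oct

/-- Octonion multiplication (Cayley–Dickson construction). -/
def omul (x y : Oct) : Oct := (x.1 * y.1 - star y.2 * x.2, y.2 * x.1 + x.2 * star y.1)

/-- Octonion conjugation. -/
def oconj (x : Oct) : Oct := (star x.1, -x.2)

/-- The unit octonion. -/
def oone : Oct := (1, 0)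

/-- Real part of an octonion: the unique scalar with `x + oconj x = (2 * oRe x) • oone`. -/
def oRe (x : Oct) : ℂ := x.1.re

/-- Squared norm of an octonion: the unique scalar with `omul x (oconj x) = onormSq x • oone`. -/
def onormSq (x : Oct) : ℂ := Quaternion.normSq x.1 + Quaternion.normSq x.2

theorem omul_add (z x y : Oct) : omul z (x + y) = omul z x + omul z y := by
  have h : ∀ a b : Hq, star (a + b) = star a + star b := fun a b => star_add a b
  simp only [omul, Prod.fst_add, Prod.snd_add, h, mul_add, add_mul, Prod.mk_add_mk,
    Prod.mk.injEq]
  constructor <;> abel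

theorem add_omul (x y z : Oct) : omul (x + y) z = omul x z + omul y z := by
  simp only [omul, Prod.fst_add, Prod.snd_add, star_add, mul_add, add_mul, Prod.mk_add_mk,
    Prod.mk.injEq]
  constructor <;> abel

theorem omul_smul (t : ℂ) (z x : Oct) : omul z (t • x) = t • omul z x := by
  simp only [omul, Prod.smul_fst, Prod.smul_snd, Quaternion.star_smul, q_smul_mul,
    q_mul_smul, Prod.smul_mk, smul_sub, smul_add]

theorem smul_omul (t : ℂ) (x z : Oct) : omul (t • x) z = t • omul x z := by
  simp only [omul, Prod.smul_fst, Prod.smul_snd, Quaternion.star_smul, q_smul_mul,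
    q_mul_smul, Prod.smul_mk, smul_sub, smul_add]

/-- Left multiplication `L_z` as a `ℂ`-linear endomorphism of the octonions. -/
def Lmul (z : Oct) : Oct →ₗ[ℂ] Oct where
  toFun x := omul z x
  map_add' x y := omul_add z x y
  map_smul' t x := omul_smul t z x

/-- Right multiplication `R_z` as a `ℂ`-linear endomorphism of the octonions. -/
def Rmul (z : Oct) : Oct →ₗ[ℂ] Oct where
  toFun x := omul x z
  map_add' x y := add_omul x y z
  map_smul' t x := smul_omul t x z

end Oct

namespace Oct

/-- The octonionic determinant of the hermitian matrix
`[[λ₁, c, b̄], [c̄, λ₂, a], [b, ā, λ₃]]`. -/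
def detO (l1 l2 l3 : ℂ) (a b c : Oct) : ℂ :=
  l1 * l2 * l3 + 2 * oRe (omul c (omul a b)) - l1 * onormSq a - l2 * onormSq b - l3 * onormSq c

/-- The associator `[c,b,a] = (c·b)·a − c·(b·a)`. -/
def assoc (c b a : Oct) : Oct := omul (omul c b) a - omul c (omul b a)

/-- `φ(c,b,a) = (1/2)·Re((c·b̄ − b̄·c)·a)`. -/
def phi (c b a : Oct) : ℂ := (1 / 2) * oRe (omul (omul c (oconj b) - omul (oconj b) c) a)

/-- The Ogievetskiî–Dray–Manogue sextic. -/
def SODM (l1 l2 l3 : ℂ) (a b c : Oct) : ℂ :=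
  detO l1 l2 l3 a b c ^ 2 - 4 * phi c b a * detO l1 l2 l3 a b c - onormSq (assoc c b a)

/-- The Cartan cubic `C'` of the hermitian matrix `[[λ₁, c̄, ā], [c, λ₂, b], [a, b̄, λ₃]]`. -/
def cartan' (l1 l2 l3 : ℂ) (a b c : Oct) : ℂ :=
  detO l1 l2 l3 a b c - 2 * oRe (omul c (omul a b)) + 2 * oRe (omul (oconj c) (omul b a))

/-- The sextic `𝔖`. -/
def frakS (l1 l2 l3 : ℂ) (a b c : Oct) : ℂ :=
  (l1 * onormSq a + l2 * onormSq b + l3 * onormSq c - l1 * l2 * l3) ^ 2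
    - 4 * (l1 * onormSq a + l2 * onormSq b + l3 * onormSq c - l1 * l2 * l3)
        * oRe c * oRe (omul a b)
    + 4 * (onormSq b * onormSq a * oRe c ^ 2 + onormSq c * oRe (omul a b) ^ 2
        - onormSq a * onormSq b * onormSq c)

/-- The endomorphism `M_A` of `𝕆³` attached to
`A = [[λ₁, c, b̄], [c̄, λ₂, a], [b, ā, λ₃]] ∈ J₃(𝕆)`. -/
def MA (l1 l2 l3 : ℂ) (a b c : Oct) : Oct × Oct × Oct →ₗ[ℂ] Oct × Oct × Oct where
  toFun p := (l1 • p.1 + omul c p.2.1 + omul (oconj b) p.2.2,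
              omul (oconj c) p.1 + l2 • p.2.1 + omul a p.2.2,
              omul b p.1 + omul (oconj a) p.2.1 + l3 • p.2.2)
  map_add' p q := by
    simp only [Prod.fst_add, Prod.snd_add, omul_add, smul_add, Prod.mk_add_mk, Prod.mk.injEq]
    refine ⟨?_, ?_, ?_⟩ <;> abel
  map_smul' t p := by
    simp only [Prod.smul_fst, Prod.smul_snd, omul_smul, smul_comm t, Prod.smul_mk, smul_add,
      RingHom.id_apply]

/-- The endomorphism `N_A` of `𝕆³` of the twisted octonionic eigenvalue problem. -/
def NA (l1 l2 l3 : ℂ) (a b c : Oct) : Oct × Oct × Oct →ₗ[ℂ] Oct × Oct × Oct where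
  toFun p := (l1 • p.1 + omul p.2.1 c + omul (oconj b) p.2.2,
              omul p.1 (oconj c) + l2 • p.2.1 + omul a p.2.2,
              omul b p.1 + omul (oconj a) p.2.1 + l3 • p.2.2)
  map_add' p q := by
    simp only [Prod.fst_add, Prod.snd_add, omul_add, add_omul, smul_add, Prod.mk_add_mk,
      Prod.mk.injEq]
    refine ⟨?_, ?_, ?_⟩ <;> abel
  map_smul' t p := by
    simp only [Prod.smul_fst, Prod.smul_snd, omul_smul, smul_omul, smul_comm t, Prod.smul_mk,
      smul_add, RingHom.id_apply]

/-- The exceptional Jordan algebra `J₃(𝕆)`, as the 27-dimensional space of tuples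
`(λ₁, λ₂, λ₃, a, b, c)`. -/
abbrev J3 : Type := ℂ × ℂ × ℂ × Oct × Oct × Oct

def MAj (A : J3) : Oct × Oct × Oct →ₗ[ℂ] Oct × Oct × Oct :=
  MA A.1 A.2.1 A.2.2.1 A.2.2.2.1 A.2.2.2.2.1 A.2.2.2.2.2

def NAj (A : J3) : Oct × Oct × Oct →ₗ[ℂ] Oct × Oct × Oct :=
  NA A.1 A.2.1 A.2.2.1 A.2.2.2.1 A.2.2.2.2.1 A.2.2.2.2.2

def SODMj (A : J3) : ℂ := SODM A.1 A.2.1 A.2.2.1 A.2.2.2.1 A.2.2.2.2.1 A.2.2.2.2.2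

def cartan'j (A : J3) : ℂ := cartan' A.1 A.2.1 A.2.2.1 A.2.2.2.1 A.2.2.2.2.1 A.2.2.2.2.2

def frakSj (A : J3) : ℂ := frakS A.1 A.2.1 A.2.2.1 A.2.2.2.1 A.2.2.2.2.1 A.2.2.2.2.2

/-- A twisted triality pair: a pair of `ℂ`-linear norm-preserving bijections of `𝕆` with
`T₁(x)·T₂(y) = T₁(x·y)` for all `x, y`. -/
def TwistedPair (T1 T2 : Oct →ₗ[ℂ] Oct) : Prop :=
  Function.Bijective T1 ∧ Function.Bijective T2 ∧
    (∀ x, onormSq (T1 x) = onormSq x) ∧ (∀ x, onormSq (T2 x) = onormSq x) ∧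
    ∀ x y, omul (T1 x) (T2 y) = T1 (omul x y)

/-- `K(x) = conj (T₁ x̄)`. -/
def Kmap (T1 : Oct →ₗ[ℂ] Oct) (x : Oct) : Oct := oconj (T1 (oconj x))

/-- The twisted `Spin₇`-action on `J₃(𝕆)`:
`(T₁,T₂)·(λ₁, λ₂, λ₃, a, b, c) = (λ₁, λ₂, λ₃, T₁(a), K(b), T₂(c))`. -/
def spinAct (T1 T2 : Oct →ₗ[ℂ] Oct) (A : J3) : J3 :=
  (A.1, A.2.1, A.2.2.1, T1 A.2.2.2.1, Kmap T1 A.2.2.2.2.1, T2 A.2.2.2.2.2)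

/-- The hermitian matrix `[[λ₁, c, b̄], [c̄, λ₂, a], [b, ā, λ₃]]` attached to `A ∈ J₃(𝕆)`,
with complex scalars embedded as multiples of the unit octonion. -/
def toMat (A : J3) : Matrix (Fin 3) (Fin 3) Oct :=
  !![A.1 • oone, A.2.2.2.2.2, oconj A.2.2.2.2.1;
     oconj A.2.2.2.2.2, A.2.1 • oone, A.2.2.2.1;
     A.2.2.2.2.1, oconj A.2.2.2.1, A.2.2.1 • oone]

/-- The action of a (special linear) complex `3×3` matrix `C` on `J₃(𝕆)`, sending the hermitian
matrix `M` of `A` to `Cᵀ · M · C` (the entries of `C` being central scalars). -/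
def slAct (C : Matrix (Fin 3) (Fin 3) ℂ) (A : J3) : J3 :=
  let M : Matrix (Fin 3) (Fin 3) Oct :=
    Matrix.of fun i j => ∑ k, ∑ l, (C k i * C l j) • toMat A k l
  (oRe (M 0 0), oRe (M 1 1), oRe (M 2 2), M 1 2, M 2 0, M 0 1)

/-- The coordinates of `A ∈ J₃(𝕆)` in the fixed standard `ℂ`-basis of `ℂ³ × 𝕆³`. -/
def coords (A : J3) : Fin 27 → ℂ :=
  ![A.1, A.2.1, A.2.2.1,
    A.2.2.2.1.1.re, A.2.2.2.1.1.imI, A.2.2.2.1.1.imJ, A.2.2.2.1.1.imK,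
    A.2.2.2.1.2.re, A.2.2.2.1.2.imI, A.2.2.2.1.2.imJ, A.2.2.2.1.2.imK,
    A.2.2.2.2.1.1.re, A.2.2.2.2.1.1.imI, A.2.2.2.2.1.1.imJ, A.2.2.2.2.1.1.imK,
    A.2.2.2.2.1.2.re, A.2.2.2.2.1.2.imI, A.2.2.2.2.1.2.imJ, A.2.2.2.2.1.2.imK,
    A.2.2.2.2.2.1.re, A.2.2.2.2.2.1.imI, A.2.2.2.2.2.1.imJ, A.2.2.2.2.2.1.imK,
    A.2.2.2.2.2.2.re, A.2.2.2.2.2.2.imI, A.2.2.2.2.2.2.imJ, A.2.2.2.2.2.2.imK]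

end Oct

/-! Left-multiplying `T₁(x̄)·T₂(xy) = T₁(x̄(xy)) = N(x)·T₁(y)` by `K(x) = conj (T₁ x̄)` and using
`ā(ab) = N(a)·b` twice gives `N(x)·(K(x)·T₁(y) − T₂(xy)) = 0`. The defect `K(x)·T₁(y) − T₂(xy)` is
linear in `x` and vanishes at `x = 1`, so it is unchanged by `x ↦ x + s`, while `N(x + s)` is a
monic quadratic in `s`; hence the defect vanishes. Taking `x` or `y` equal to `1` in the first
identity shows that `T₂` commutes with conjugation, and conjugating `T₁(ȳ)·T₂(x̄) = T₁(ȳx̄)` then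
gives the second identity. -/

theorem eq_zero_of_forall_sq_add_mul_add_smul_eq_zero {K V : Type*} [Field K] [NeZero (2 : K)]
    [AddCommGroup V] [Module K V] (b c : K) (v : V) (h : ∀ s : K, (s ^ 2 + b * s + c) • v = 0) :
    v = 0 := by
  have h2 : (2 : K) • v = 0 :=
    calc (2 : K) • v
        = ((1 : K) ^ 2 + b * 1 + c) • v + ((-1 : K) ^ 2 + b * (-1) + c) • v
          - (2 : K) • (((0 : K) ^ 2 + b * 0 + c) • v) := by module
      _ = 0 := by rw [h, h, h, smul_zero, add_zero, sub_zero]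
  exact (smul_eq_zero.mp h2).resolve_left two_ne_zero

namespace Oct

@[simp]
lemma oconj_oconj (x : Oct) : oconj (oconj x) = x := by
  simp [oconj]

lemma oconj_add (x y : Oct) : oconj (x + y) = oconj x + oconj y :=
  Prod.ext (star_add x.1 y.1) (neg_add x.2 y.2)

lemma oconj_smul (t : ℂ) (x : Oct) : oconj (t • x) = t • oconj x := by
  simp [oconj, Quaternion.star_smul]

@[simp]
lemma oconj_oone : oconj oone = oone := by
  simp [oconj, oone]

@[simp]
lemma omul_oone (x : Oct) : omul x oone = x := by
  simp [omul, oone]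

@[simp]
lemma oone_omul (x : Oct) : omul oone x = x := by
  simp [omul, oone]

@[simp]
lemma onormSq_oone : onormSq oone = 1 := by
  simp [onormSq, oone]

@[simp]
lemma onormSq_oconj (x : Oct) : onormSq (oconj x) = onormSq x := by
  simp [onormSq, oconj]

lemma onormSq_add_smul_oone (x : Oct) (s : ℂ) :
    onormSq (x + s • oone) = s ^ 2 + 2 * oRe x * s + onormSq x := by
  simp [onormSq, oone, oRe, Quaternion.normSq_def']
  ring

lemma oconj_omul (x y : Oct) : oconj (omul x y) = omul (oconj y) (oconj x) := by
  refine Prod.ext ?_ ?_ <;> ext <;> simp [omul, oconj] <;> ring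

lemma oconj_omul_omul (a b : Oct) : omul (oconj a) (omul a b) = onormSq a • b := by
  refine Prod.ext ?_ ?_ <;> ext <;> simp [omul, oconj, onormSq, Quaternion.normSq_def'] <;> ring

lemma Kmap_add (T : Oct →ₗ[ℂ] Oct) (x y : Oct) : Kmap T (x + y) = Kmap T x + Kmap T y := by
  simp only [Kmap, oconj_add, map_add]

lemma Kmap_smul (T : Oct →ₗ[ℂ] Oct) (t : ℂ) (x : Oct) : Kmap T (t • x) = t • Kmap T x := by
  simp only [Kmap, oconj_smul, map_smul]

variable {T1 T2 : Oct →ₗ[ℂ] Oct}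

lemma onormSq_smul_Kmap_omul_map (hmul : ∀ x y, omul (T1 x) (T2 y) = T1 (omul x y))
    (hnorm : ∀ x, onormSq (T1 x) = onormSq x) (x y : Oct) :
    onormSq x • omul (Kmap T1 x) (T1 y) = onormSq x • T2 (omul x y) := by
  have hT1y : omul (T1 (oconj x)) (T2 (omul x y)) = onormSq x • T1 y := by
    rw [hmul, oconj_omul_omul, map_smul]
  calc onormSq x • omul (Kmap T1 x) (T1 y)
      = omul (oconj (T1 (oconj x))) (omul (T1 (oconj x)) (T2 (omul x y))) := by
        rw [hT1y, omul_smul, Kmap]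
    _ = onormSq x • T2 (omul x y) := by rw [oconj_omul_omul, hnorm, onormSq_oconj]

lemma Kmap_omul_map (hmul : ∀ x y, omul (T1 x) (T2 y) = T1 (omul x y))
    (hnorm : ∀ x, onormSq (T1 x) = onormSq x) (x y : Oct) :
    omul (Kmap T1 x) (T1 y) = T2 (omul x y) := by
  have hone : omul (Kmap T1 oone) (T1 y) = T2 y := by
    simpa using onormSq_smul_Kmap_omul_map hmul hnorm oone y
  have hshift : ∀ s : ℂ, omul (Kmap T1 (x + s • oone)) (T1 y) - T2 (omul (x + s • oone) y)
      = omul (Kmap T1 x) (T1 y) - T2 (omul x y) := by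
    intro s
    rw [Kmap_add, Kmap_smul, add_omul, smul_omul, hone, add_omul, smul_omul, oone_omul, map_add,
      map_smul]
    abel
  refine sub_eq_zero.mp (eq_zero_of_forall_sq_add_mul_add_smul_eq_zero (2 * oRe x) (onormSq x)
    _ fun s => ?_)
  rw [← hshift s, ← onormSq_add_smul_oone, smul_sub, sub_eq_zero]
  exact onormSq_smul_Kmap_omul_map hmul hnorm _ y

lemma map_oconj_of_Kmap_omul_map (hK : ∀ x y, omul (Kmap T1 x) (T1 y) = T2 (omul x y))
    (x : Oct) : T2 (oconj x) = oconj (T2 x) :=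
  calc T2 (oconj x)
      = omul (Kmap T1 oone) (T1 (oconj x)) := by rw [hK, oone_omul]
    _ = oconj (omul (Kmap T1 x) (T1 oone)) := by simp [Kmap, oconj_omul]
    _ = oconj (T2 x) := by rw [hK, omul_oone]

lemma map_omul_Kmap (hmul : ∀ x y, omul (T1 x) (T2 y) = T1 (omul x y))
    (hK : ∀ x y, omul (Kmap T1 x) (T1 y) = T2 (omul x y)) (x y : Oct) :
    omul (T2 x) (Kmap T1 y) = Kmap T1 (omul x y) := by
  rw [Kmap, Kmap, oconj_omul, ← hmul, oconj_omul, map_oconj_of_Kmap_omul_map hK, oconj_oconj]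

/-- If `(T₁, T₂)` is a twisted triality pair and `K(x) = conj (T₁ x̄)`, then
`K(x)·T₁(y) = T₂(x·y)` and `T₂(x)·K(y) = K(x·y)` for all `x, y ∈ 𝕆`; that is, the triples
`(K, T₁, T₂)` and `(T₂, K, K)` are again triality triples. -/
theorem twisted_pair_derived_trialities (T1 T2 : Oct →ₗ[ℂ] Oct) (h : TwistedPair T1 T2)
    (x y : Oct) :
    omul (Kmap T1 x) (T1 y) = T2 (omul x y) ∧
      omul (T2 x) (Kmap T1 y) = Kmap T1 (omul x y) := by
  obtain ⟨-, -, hnorm, -, hmul⟩ := h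
  have hK := Kmap_omul_map hmul hnorm
  exact ⟨hK x y, map_omul_Kmap hmul hK x y⟩

end Oct
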